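/- arXiv:2302.00643 — 2 statements merged into one kernel-verified Lean document; each statement's English description precedes it below -/
import Mathlib

section
/- Let A and B be real symmetric n×n matrices such that the matrix pencil (A,B) is regular, i.e. det(A − z·B) ≠ 0 for at least one z ∈ ℂ (viewing A and B as complex matrices). If the hyperplanes A^⊥ and B^⊥ are disjoint, i.e. there is no X ∈ 𝒫(n) with tr(A·X) = 0 and tr(B·X) = 0, then all generalized eigenvalues of the pencil (A,B) are real: every z ∈ ℂ with det(A − z·B) = 0 satisfies Im z = 0. -/
/-!
Suppose `z ∉ ℝ` and `(A - z B) v = 0` with `v ≠ 0`. The Hermitian forms satisfy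
`v* A v = z · v* B v` and are both real, so both vanish. Since no positive definite matrix is
trace-orthogonal to both `A` and `B`, Hahn–Banach separation of the open cone of positive definite
matrices from the subspace `{X | tr (A X) = tr (B X) = 0}` yields a nontrivial combination
`C = α A + β B` that is positive semidefinite. Then `v* C v = 0` forces `C v = 0`, that is
`(α z + β) B v = 0`; as `α z + β ≠ 0`, we get `B v = A v = 0`, so `det (A - w B) = 0` for every `w`,
contradicting regularity of the pencil.
-/

open Matrix Filter Topology
open scoped ComplexOrder

lemma Complex.ofReal_mul_add_ofReal_eq_zero {a b : ℝ} {z : ℂ} (hz : z.im ≠ 0)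
    (h : a * z + b = 0) : a = 0 ∧ b = 0 := by
  have ha : a = 0 := by
    have him := congrArg Complex.im h
    simp only [add_im, mul_im, ofReal_re, ofReal_im, zero_mul, add_zero, zero_im] at him
    exact (mul_eq_zero.mp him).resolve_right hz
  subst ha
  simpa using h

lemma LinearMap.eq_zero_of_forall_le_smul {E : Type*} [AddCommGroup E] [Module ℝ E]
    (f : E →ₗ[ℝ] ℝ) {s : ℝ} {x : E} (h : ∀ t : ℝ, s ≤ f (t • x)) : f x = 0 := by
  by_contra hfx
  have := h ((s - 1) / f x)
  rw [map_smul, smul_eq_mul, div_mul_cancel₀ _ hfx] at this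
  linarith

namespace Matrix

variable {m : Type*}

lemma isSymm_sum_smul {ι : Type*} [Fintype ι] {A : ι → Matrix m m ℝ}
    (hA : ∀ i, (A i).IsSymm) (c : ι → ℝ) : (∑ i, c i • A i).IsSymm := by
  simp [IsSymm, transpose_sum, (hA _).eq]

lemma IsSymm.isHermitian_map_ofReal {A : Matrix m m ℝ} (hA : A.IsSymm) :
    (A.map ((↑) : ℝ → ℂ)).IsHermitian :=
  (isHermitian_iff_isSymm.mpr hA).map _ fun x => by simp

variable [Fintype m]

lemma smul_dotProduct_mulVec_smul {R : Type*} [CommSemiring R] (t : R) (M : Matrix m m R)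
    (x : m → R) : (t • x) ⬝ᵥ M *ᵥ (t • x) = t ^ 2 * (x ⬝ᵥ M *ᵥ x) := by
  rw [mulVec_smul, smul_dotProduct, dotProduct_smul, smul_eq_mul, smul_eq_mul]; ring

lemma IsSymm.trace_mul_transpose {A : Matrix m m ℝ} (hA : A.IsSymm) (M : Matrix m m ℝ) :
    (A * Mᵀ).trace = (A * M).trace := by
  rw [← trace_transpose, transpose_mul, transpose_transpose, hA.eq, trace_mul_comm]

lemma PosDef.exists_pos_det_smul_eq_one [DecidableEq m] {X : Matrix m m ℝ} (hX : X.PosDef) :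
    ∃ c : ℝ, 0 < c ∧ (c • X).det = 1 := by
  rcases isEmpty_or_nonempty m with hm | hm
  · exact ⟨1, one_pos, det_isEmpty⟩
  have hcard : (Fintype.card m : ℝ) ≠ 0 := by positivity
  refine ⟨X.det ^ (-(Fintype.card m : ℝ)⁻¹), Real.rpow_pos_of_pos hX.det_pos _, ?_⟩
  rw [det_smul, ← Real.rpow_natCast, ← Real.rpow_mul hX.det_pos.le, neg_mul,
    inv_mul_cancel₀ hcard, Real.rpow_neg_one, inv_mul_cancel₀ hX.det_pos.ne']

/-- Unlike `{M | M.PosDef}`, this cone is open in the space of all matrices, as the separation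
argument needs; `M ↦ M + Mᵀ` takes it back to positive definite matrices. -/
def posQuadCone (m : Type*) [Fintype m] : Set (Matrix m m ℝ) :=
  {M | ∀ x : m → ℝ, x ≠ 0 → 0 < x ⬝ᵥ M *ᵥ x}

lemma convex_posQuadCone : Convex ℝ (posQuadCone m) := by
  intro M hM N hN a b ha hb hab x hx
  rw [add_mulVec, smul_mulVec, smul_mulVec, dotProduct_add, dotProduct_smul, dotProduct_smul,
    smul_eq_mul, smul_eq_mul]
  rcases ha.eq_or_lt with rfl | ha
  · obtain rfl : b = 1 := by simpa using hab
    simpa using hN x hx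
  · nlinarith [hM x hx, hN x hx]

lemma isOpen_posQuadCone : IsOpen (posQuadCone m) := by
  refine isOpen_iff_mem_nhds.mpr fun M hM => ?_
  have hcont : Continuous fun p : Matrix m m ℝ × (m → ℝ) => p.2 ⬝ᵥ p.1 *ᵥ p.2 := by
    fun_prop
  have hsphere : ∀ᶠ N in 𝓝 M, ∀ y ∈ Metric.sphere (0 : m → ℝ) 1, 0 < y ⬝ᵥ N *ᵥ y :=
    (isCompact_sphere 0 1).eventually_forall_of_forall_eventually fun y hy =>
      continuousAt_const.eventually_lt hcont.continuousAt
        (hM y (ne_zero_of_mem_unit_sphere ⟨y, hy⟩))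
  filter_upwards [hsphere] with N hN x hx
  have hx' : 0 < ‖x‖ := norm_pos_iff.mpr hx
  have hunit := hN (‖x‖⁻¹ • x) (by simp [norm_smul, hx'.ne'])
  rw [smul_dotProduct_mulVec_smul] at hunit
  exact pos_of_mul_pos_right hunit (by positivity)

lemma PosDef.mem_posQuadCone {M : Matrix m m ℝ} (hM : M.PosDef) : M ∈ posQuadCone m :=
  fun x hx => by simpa using hM.dotProduct_mulVec_pos hx

lemma posDef_add_transpose_of_mem_posQuadCone {M : Matrix m m ℝ} (hM : M ∈ posQuadCone m) :
    (M + Mᵀ).PosDef := by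
  refine .of_dotProduct_mulVec_pos ?_ fun x hx => ?_
  · rw [IsHermitian, conjTranspose_eq_transpose_of_trivial, transpose_add, transpose_transpose,
      add_comm]
  · rw [star_trivial, add_mulVec, dotProduct_add, mulVec_transpose, dotProduct_comm x (x ᵥ* M),
      ← dotProduct_mulVec]
    linarith [hM x hx]

theorem exists_trace_mul_neg_of_not_exists_posDef {ι : Type*} [Fintype ι]
    {A : ι → Matrix m m ℝ} (hA : ∀ i, (A i).IsSymm)
    (h : ¬∃ X : Matrix m m ℝ, X.PosDef ∧ ∀ i, (A i * X).trace = 0) :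
    ∃ c : ι → ℝ, ∀ M ∈ posQuadCone m, ((∑ i, c i • A i) * M).trace < 0 := by
  let L (i : ι) : Matrix m m ℝ →ₗ[ℝ] ℝ := traceLinearMap m ℝ ℝ ∘ₗ LinearMap.mulLeft ℝ (A i)
  let W : Submodule ℝ (Matrix m m ℝ) := ⨅ i, LinearMap.ker (L i)
  have hW (M : Matrix m m ℝ) : M ∈ W ↔ ∀ i, (A i * M).trace = 0 := by
    simp [W, L, Submodule.mem_iInf]
  have hdisj : Disjoint (posQuadCone m) W := Set.disjoint_left.mpr fun M hM hMW =>
    h ⟨M + Mᵀ, posDef_add_transpose_of_mem_posQuadCone hM, fun i => by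
      rw [mul_add, trace_add, (hA i).trace_mul_transpose, (hW M).1 hMW i, add_zero]⟩
  obtain ⟨f, s, hfU, hfW⟩ :=
    geometric_hahn_banach_open convex_posQuadCone isOpen_posQuadCone W.convex hdisj
  have hker : W ≤ LinearMap.ker f.toLinearMap := fun M hM =>
    f.toLinearMap.eq_zero_of_forall_le_smul fun t => hfW _ (W.smul_mem t hM)
  obtain ⟨c, hc⟩ := (Submodule.mem_span_range_iff_exists_fun ℝ).mp
    (mem_span_of_iInf_ker_le_ker hker)
  have hf (M : Matrix m m ℝ) : f M = ((∑ i, c i • A i) * M).trace := by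
    rw [← ContinuousLinearMap.coe_coe, ← hc]
    simp [L, Finset.sum_mul, trace_sum]
  have hs : s ≤ 0 := by simpa using hfW 0 W.zero_mem
  exact ⟨c, fun M hM => hf M ▸ (hfU M hM).trans_le hs⟩

lemma posSemidef_neg_of_trace_mul_neg [DecidableEq m] {C : Matrix m m ℝ} (hC : C.IsSymm)
    (h : ∀ M ∈ posQuadCone m, (C * M).trace < 0) : (-C).PosSemidef := by
  refine .of_dotProduct_mulVec_nonneg (by simpa [IsHermitian] using hC.eq) fun x => ?_
  rw [star_trivial, neg_mulVec, dotProduct_neg, neg_nonneg, dotProduct_comm, ← trace_vecMulVec,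
    ← mul_vecMulVec]
  -- `x xᵀ` is a limit of the positive definite matrices `x xᵀ + ε • 1`.
  have hlim : Tendsto (fun ε : ℝ => (C * (vecMulVec x x + ε • 1)).trace) (𝓝[>] 0)
      (𝓝 (C * vecMulVec x x).trace) :=
    ((by fun_prop : Continuous fun ε : ℝ => (C * (vecMulVec x x + ε • 1)).trace).tendsto' 0 _
      (by simp)).mono_left nhdsWithin_le_nhds
  refine le_of_tendsto hlim (eventually_nhdsWithin_of_forall fun ε hε => (h _ ?_).le)
  simpa using
    (PosDef.posSemidef_add (posSemidef_vecMulVec_self_star x) (PosDef.one.smul hε)).mem_posQuadCone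

theorem exists_posSemidef_sum_smul_of_not_exists_posDef [DecidableEq m] {ι : Type*}
    [Fintype ι] {A : ι → Matrix m m ℝ} (hA : ∀ i, (A i).IsSymm)
    (h : ¬∃ X : Matrix m m ℝ, X.PosDef ∧ ∀ i, (A i * X).trace = 0) :
    ∃ c : ι → ℝ, c ≠ 0 ∧ (∑ i, c i • A i).PosSemidef := by
  obtain ⟨c, hc⟩ := exists_trace_mul_neg_of_not_exists_posDef hA h
  refine ⟨-c, fun hc0 => ?_, ?_⟩
  · simpa [neg_eq_zero.mp hc0] using hc 1 PosDef.one.mem_posQuadCone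
  · simpa [Finset.sum_neg_distrib] using
      posSemidef_neg_of_trace_mul_neg (isSymm_sum_smul hA c) hc

lemma PosSemidef.map_ofReal {C : Matrix m m ℝ} (hC : C.PosSemidef) :
    (C.map ((↑) : ℝ → ℂ)).PosSemidef := by
  obtain ⟨k, w, rfl⟩ := posSemidef_iff_eq_sum_vecMulVec.mp hC
  have hmap : (∑ i, vecMulVec (w i) (star (w i))).map ((↑) : ℝ → ℂ) =
      ∑ i, vecMulVec (fun j => (w i j : ℂ)) (star fun j => (w i j : ℂ)) := by
    ext; simp [Matrix.sum_apply, vecMulVec_apply]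
  rw [hmap]
  exact posSemidef_sum _ fun i _ => posSemidef_vecMulVec_self_star _

lemma star_dotProduct_mulVec_eq_zero_of_mulVec_eq_smul {M N : Matrix m m ℂ}
    (hM : M.IsHermitian) (hN : N.IsHermitian) {z : ℂ} (hz : z.im ≠ 0) {v : m → ℂ}
    (hv : M *ᵥ v = z • N *ᵥ v) : star v ⬝ᵥ N *ᵥ v = 0 := by
  have hNv : (star v ⬝ᵥ N *ᵥ v).im = 0 := hN.im_star_dotProduct_mulVec_self v
  have hMv : (z * (star v ⬝ᵥ N *ᵥ v)).im = 0 := by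
    rw [← smul_eq_mul, ← dotProduct_smul, ← hv]
    exact hM.im_star_dotProduct_mulVec_self v
  rw [Complex.mul_im, hNv, mul_zero, zero_add] at hMv
  exact Complex.ext ((mul_eq_zero.mp hMv).resolve_left hz) hNv

theorem map_ofReal_mulVec_eq_zero_of_posSemidef_smul_add_smul {A B : Matrix m m ℝ}
    (hA : A.IsSymm) (hB : B.IsSymm) {a b : ℝ} (hab : ¬(a = 0 ∧ b = 0))
    (hC : (a • A + b • B).PosSemidef) {z : ℂ} (hz : z.im ≠ 0) {v : m → ℂ}
    (hv : A.map (↑) *ᵥ v = z • B.map (↑) *ᵥ v) : B.map ((↑) : ℝ → ℂ) *ᵥ v = 0 := by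
  set A' := A.map ((↑) : ℝ → ℂ)
  set B' := B.map ((↑) : ℝ → ℂ)
  have hBv : star v ⬝ᵥ B' *ᵥ v = 0 := star_dotProduct_mulVec_eq_zero_of_mulVec_eq_smul
    hA.isHermitian_map_ofReal hB.isHermitian_map_ofReal hz hv
  have hAv : star v ⬝ᵥ A' *ᵥ v = 0 := by rw [hv, dotProduct_smul, hBv, smul_zero]
  have hCmap : (a • A + b • B).map (↑) = (a : ℂ) • A' + (b : ℂ) • B' := by
    ext; simp [A', B']
  have hCv : ((a : ℂ) * z + b) • B' *ᵥ v = 0 := by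
    have := (hC.map_ofReal.dotProduct_mulVec_zero_iff v).mp (by
      rw [hCmap, add_mulVec, smul_mulVec, smul_mulVec, dotProduct_add, dotProduct_smul,
        dotProduct_smul, hAv, hBv, smul_zero, smul_zero, add_zero])
    rwa [hCmap, add_mulVec, smul_mulVec, smul_mulVec, hv, smul_smul, ← add_smul] at this
  exact (smul_eq_zero.mp hCv).resolve_left fun h =>
    hab (Complex.ofReal_mul_add_ofReal_eq_zero hz h)

lemma det_sub_smul_eq_zero_of_mulVec_eq_zero {R : Type*} [CommRing R] [IsDomain R]
    [DecidableEq m] {M N : Matrix m m R} {v : m → R} (hv : v ≠ 0) (hM : M *ᵥ v = 0)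
    (hN : N *ᵥ v = 0) (w : R) : (M - w • N).det = 0 :=
  exists_mulVec_eq_zero_iff.mp
    ⟨v, hv, by rw [sub_mulVec, smul_mulVec, hM, hN, smul_zero, sub_zero]⟩

end Matrix

/-- If the regular symmetric pencil `(A,B)` has disjoint hyperplanes `A^⊥`,
`B^⊥` in `𝒫(n)`, then all generalized eigenvalues of the pencil are real. -/
theorem generalized_eigenvalues_real_of_disjoint_hyperplanes
    (n : ℕ) (A B : Matrix (Fin n) (Fin n) ℝ) (hA : A.IsSymm) (hB : B.IsSymm)
    (hreg : ∃ z : ℂ,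
      ((A.map (Complex.ofReal)) - z • (B.map (Complex.ofReal))).det ≠ 0)
    (hdisj : ¬∃ X : Matrix (Fin n) (Fin n) ℝ,
      X.PosDef ∧ X.det = 1 ∧ (A * X).trace = 0 ∧ (B * X).trace = 0) :
    ∀ z : ℂ, ((A.map (Complex.ofReal)) - z • (B.map (Complex.ofReal))).det = 0 →
      z.im = 0 := by
  intro z hz
  by_contra him
  have hno : ¬∃ X : Matrix (Fin n) (Fin n) ℝ, X.PosDef ∧ ∀ i, (![A, B] i * X).trace = 0 := by
    rintro ⟨X, hX, htr⟩
    obtain ⟨c, hc, hdet⟩ := hX.exists_pos_det_smul_eq_one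
    exact hdisj ⟨c • X, hX.smul hc, hdet, by simpa [hc.ne'] using htr 0,
      by simpa [hc.ne'] using htr 1⟩
  obtain ⟨c, hc0, hC⟩ :=
    exists_posSemidef_sum_smul_of_not_exists_posDef (Fin.forall_fin_two.mpr ⟨hA, hB⟩) hno
  simp only [Fin.sum_univ_two, cons_val_zero, cons_val_one] at hC
  obtain ⟨v, hv0, hv⟩ := exists_mulVec_eq_zero_iff.mpr hz
  rw [sub_mulVec, smul_mulVec, sub_eq_zero] at hv
  have hBv := map_ofReal_mulVec_eq_zero_of_posSemidef_smul_add_smul hA hB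
    (fun h => hc0 (by ext i; fin_cases i <;> simp [h.1, h.2])) hC him hv
  obtain ⟨w, hw⟩ := hreg
  exact hw (det_sub_smul_eq_zero_of_mulVec_eq_zero hv0 (by rw [hv, hBv, smul_zero]) hBv w)
end

section
/- Let k ≥ 3 and let λ_1 < λ_2 < ⋯ < λ_k be real numbers; take indices cyclically modulo k and write d_i = λ_{i+1} − λ_i and s_i = λ_{i+1} + λ_i. Set S₁ = Σ 1/d_i, S₂ = Σ s_i/d_i, S₃ = Σ s_i²/d_i, T₂ = Σ (2 + s_i)/d_i, T₃ = Σ (2 + s_i)²/d_i and U = Σ s_i·(2 + s_i)/d_i. Then S₁ > 0, S₃ > 0, T₃ > 0, S₂² < S₁·S₃, T₂² < S₁·T₃, U² < S₃·T₃, and the angle-addition identity arccos(S₂/√(S₁·S₃)) = arccos(T₂/√(S₁·T₃)) + arccos(U/√(S₃·T₃)) holds. -/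
/-!
Put `Q(a, b) = ∑ (a + b sᵢ)² / dᵢ = a² S₁ + 2ab S₂ + b² S₃`. With `g(t) = b t² + a t` every term
equals `(g λᵢ₊₁ - g λᵢ)² / dᵢ³`. Over the `k - 1` increasing steps the numerators `g λᵢ₊₁ - g λᵢ`
sum to `g λₖ - g λ₁` and the `dᵢ` to `λₖ - λ₁`, so the wrap-around term is `-(∑ Δg)² / (∑ d)³`.
By Titu's lemma and `∑ dᵢ³ < (∑ dᵢ)³` the other terms outweigh it: `Q` is positive definite.

Moreover `T₂ = 2 S₁ + S₂`, `U = 2 S₂ + S₃` and `T₃ = Q(2, 1)`. Realizing the Gram matrix of `Q` by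
vectors `u, v` of the plane, these are the inner products of `u`, `v` and `w = 2 u + v`, and the
arccos identity is `∠(u, v) = ∠(u, w) + ∠(v, w)`, valid since `w` lies in the cone spanned by `u`
and `v`.
-/

open Finset Real InnerProductGeometry
open scoped RealInnerProductSpace

theorem sum_add_mul_sq_div {ι : Type*} (s : Finset ι) (x y : ι → ℝ) (a b : ℝ) :
    ∑ i ∈ s, (a + b * x i) ^ 2 / y i =
      a ^ 2 * ∑ i ∈ s, 1 / y i + 2 * a * b * ∑ i ∈ s, x i / y i +
        b ^ 2 * ∑ i ∈ s, x i ^ 2 / y i := by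
  simp only [mul_sum, ← sum_add_distrib]
  exact sum_congr rfl fun i _ ↦ by ring

section Sums

variable {ι : Type*} {s : Finset ι}

theorem sum_pow_lt_pow_sum {f : ι → ℝ} (hs : 1 < #s) (hf : ∀ i ∈ s, 0 < f i) {n : ℕ}
    (hn : 2 ≤ n) : ∑ i ∈ s, f i ^ n < (∑ i ∈ s, f i) ^ n := by
  obtain ⟨m, rfl⟩ : ∃ m, n = m + 1 := ⟨n - 1, by omega⟩
  have hlt : ∀ i ∈ s, f i < ∑ j ∈ s, f j := fun i hi ↦ by
    obtain ⟨j, hj, hji⟩ := exists_mem_ne hs i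
    exact single_lt_sum hji hi hj (hf j hj) fun k hk _ ↦ (hf k hk).le
  calc ∑ i ∈ s, f i ^ (m + 1) < ∑ i ∈ s, (∑ j ∈ s, f j) ^ m * f i := by
        refine sum_lt_sum_of_nonempty (card_pos.1 (by omega)) fun i hi ↦ ?_
        rw [pow_succ]
        exact mul_lt_mul_of_pos_right
          (pow_lt_pow_left₀ (hlt i hi) (hf i hi).le (by omega)) (hf i hi)
    _ = (∑ i ∈ s, f i) ^ (m + 1) := by rw [← mul_sum, pow_succ]

theorem sq_sum_div_pow_sum_lt_sum_sq_div_pow {B e : ι → ℝ} (hs : 1 < #s)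
    (he : ∀ i ∈ s, 0 < e i) (hB : ∃ i ∈ s, B i ≠ 0) {n : ℕ} (hn : 2 ≤ n) :
    (∑ i ∈ s, B i) ^ 2 / (∑ i ∈ s, e i) ^ n < ∑ i ∈ s, B i ^ 2 / e i ^ n := by
  have hterm : ∀ i ∈ s, 0 < e i ^ n := fun i hi ↦ pow_pos (he i hi) n
  by_cases hsum : ∑ i ∈ s, B i = 0
  · obtain ⟨i, hi, hBi⟩ := hB
    rw [hsum, zero_pow two_ne_zero, zero_div]
    exact sum_pos' (fun j hj ↦ div_nonneg (sq_nonneg _) (hterm j hj).le)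
      ⟨i, hi, div_pos (pow_pos (abs_pos.2 hBi) 2 |>.trans_eq (sq_abs _)) (hterm i hi)⟩
  · calc (∑ i ∈ s, B i) ^ 2 / (∑ i ∈ s, e i) ^ n
        < (∑ i ∈ s, B i) ^ 2 / ∑ i ∈ s, e i ^ n :=
          div_lt_div_of_pos_left (pow_pos (abs_pos.2 hsum) 2 |>.trans_eq (sq_abs _))
            (sum_pos hterm (card_pos.1 (by omega))) (sum_pow_lt_pow_sum hs he hn)
      _ ≤ ∑ i ∈ s, B i ^ 2 / e i ^ n := sq_sum_div_le_sum_sq_div s B hterm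

end Sums

theorem sq_div_sub_lt_sum_sq_div_sub {F : ℕ → ℝ} {m : ℕ} (hm : 2 ≤ m)
    (hF : ∀ n < m, F n < F (n + 1)) {a b : ℝ} (hab : a ≠ 0 ∨ b ≠ 0) :
    (a + b * (F m + F 0)) ^ 2 / (F m - F 0) <
      ∑ n ∈ range m, (a + b * (F (n + 1) + F n)) ^ 2 / (F (n + 1) - F n) := by
  set g : ℝ → ℝ := fun x ↦ b * x ^ 2 + a * x
  have hg : ∀ x y, g y - g x = (y - x) * (a + b * (y + x)) := fun x y ↦ by ring
  have hcube : ∀ x y, x < y → (a + b * (y + x)) ^ 2 / (y - x) = (g y - g x) ^ 2 / (y - x) ^ 3 :=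
    fun x y hxy ↦ by
      rw [hg]
      field_simp [(sub_pos.2 hxy).ne']
  have hsum_g : ∑ n ∈ range m, (g (F (n + 1)) - g (F n)) = g (F m) - g (F 0) :=
    sum_range_sub (fun n ↦ g (F n)) m
  have hsum_F := sum_range_sub F m
  have hpos : ∀ n ∈ range m, 0 < F (n + 1) - F n := fun n hn ↦ sub_pos.2 (hF n (mem_range.1 hn))
  have hF0m : F 0 < F m := sub_pos.1 (hsum_F ▸ sum_pos hpos (nonempty_range_iff.2 (by omega)))
  rw [hcube _ _ hF0m, sum_congr rfl fun n hn ↦ hcube _ _ (hF n (mem_range.1 hn)), ← hsum_g,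
    ← hsum_F]
  refine sq_sum_div_pow_sum_lt_sum_sq_div_pow (by simpa) hpos ?_ (by norm_num)
  -- an affine function `t ↦ a + b * t` that is not identically zero vanishes at most once
  by_contra! hzero
  have hstep : ∀ n < 2, a + b * (F (n + 1) + F n) = 0 := fun n hn ↦ by
    have := hzero n (mem_range.2 (by omega))
    rw [hg] at this
    exact (mul_eq_zero.1 this).resolve_left (sub_pos.2 (hF n (by omega))).ne'
  have h0 := hstep 0 (by norm_num)
  have h1 := hstep 1 (by norm_num)
  have hb : b = 0 := by
    have : b * (F 2 - F 0) = 0 := by linear_combination h1 - h0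
    exact (mul_eq_zero.1 this).resolve_right (by linarith [hF 0 (by omega), hF 1 (by omega)])
  have ha : a = 0 := by simpa [hb] using h0
  exact hab.elim (· ha) (· hb)

open Fin.NatCast in
theorem cyclic_sum_sq_div_pos {k : ℕ} (hk : 2 < k) {lam : Fin k → ℝ} (hmono : StrictMono lam)
    {a b : ℝ} (hab : a ≠ 0 ∨ b ≠ 0) :
    0 < ∑ i : Fin k, (a + b * (lam (i + ⟨1, by omega⟩) + lam i)) ^ 2 /
      (lam (i + ⟨1, by omega⟩) - lam i) := by
  obtain ⟨m, rfl⟩ : ∃ m, k = m + 1 := ⟨k - 1, by omega⟩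
  have hone : (⟨1, by omega⟩ : Fin (m + 1)) = 1 := Fin.ext (Nat.mod_eq_of_lt (by omega)).symm
  set F : ℕ → ℝ := fun n ↦ lam (n : Fin (m + 1))
  have hF : ∀ n < m, F n < F (n + 1) := fun n hn ↦ hmono <| by
    simp only [Fin.lt_def, Fin.val_natCast, Nat.mod_eq_of_lt (by omega : n < m + 1),
      Nat.mod_eq_of_lt (by omega : n + 1 < m + 1)]
    omega
  have hsum : ∑ i : Fin (m + 1), (a + b * (lam (i + 1) + lam i)) ^ 2 / (lam (i + 1) - lam i) =
      ∑ n ∈ range (m + 1), (a + b * (F (n + 1) + F n)) ^ 2 / (F (n + 1) - F n) := by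
    rw [← Fin.sum_univ_eq_sum_range]
    simp [F]
  rw [hone, hsum, sum_range_succ, show F (m + 1) = F 0 by simp [F], add_comm (F 0),
    ← neg_sub (F m), div_neg]
  linarith [sq_div_sub_lt_sum_sq_div_sub (by omega) hF hab]

section Angles

variable {V : Type*} [NormedAddCommGroup V] [InnerProductSpace ℝ V]

theorem arccos_inner_div_sqrt_eq_angle (x y : V) :
    arccos (⟪x, y⟫ / √(⟪x, x⟫ * ⟪y, y⟫)) = angle x y := by
  rw [angle, norm_eq_sqrt_real_inner x, norm_eq_sqrt_real_inner y,
    ← sqrt_mul real_inner_self_nonneg]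

theorem angle_eq_angle_smul_add_add_angle_smul_add (u : V) {v : V} (hv : v ≠ 0) {c : ℝ}
    (hc : 0 < c) : angle u v = angle u (c • u + v) + angle v (c • u + v) := by
  rw [← angle_smul_left_of_pos u v hc, angle_eq_angle_add_add_angle_add (c • u) hv,
    angle_smul_left_of_pos _ _ hc]

end Angles

theorem exists_complex_inner_eq {a b c : ℝ} (ha : 0 < a) (hD : b ^ 2 ≤ a * c) :
    ∃ u v : ℂ, ⟪u, u⟫ = a ∧ ⟪u, v⟫ = b ∧ ⟪v, v⟫ = c := by
  have hsa : √a ≠ 0 := (sqrt_pos.2 ha).ne'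
  refine ⟨√a, ⟨b / √a, √(a * c - b ^ 2) / √a⟩, ?_, ?_, ?_⟩ <;>
    simp only [Complex.inner, Complex.mul_re, Complex.conj_re, Complex.conj_im, Complex.ofReal_re,
      Complex.ofReal_im, neg_zero, mul_zero, sub_zero]
  · exact mul_self_sqrt ha.le
  · exact div_mul_cancel₀ b hsa
  · field_simp
    rw [sq_sqrt (by linarith), sq_sqrt ha.le]
    ring

theorem arccos_div_sqrt_eq_arccos_add_arccos {S₁ S₂ S₃ T₂ T₃ U c : ℝ} (h₁ : 0 < S₁)
    (h₃ : 0 < S₃) (hD : S₂ ^ 2 ≤ S₁ * S₃) (hc : 0 < c) (hT₂ : T₂ = c * S₁ + S₂)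
    (hT₃ : T₃ = c ^ 2 * S₁ + 2 * c * S₂ + S₃) (hU : U = c * S₂ + S₃) :
    arccos (S₂ / √(S₁ * S₃)) = arccos (T₂ / √(S₁ * T₃)) + arccos (U / √(S₃ * T₃)) := by
  obtain ⟨u, v, huu, huv, hvv⟩ := exists_complex_inner_eq h₁ hD
  have hv : v ≠ 0 := by
    rintro rfl
    rw [inner_zero_left] at hvv
    linarith
  set w := c • u + v
  have huw : ⟪u, w⟫ = T₂ := by
    rw [hT₂, inner_add_right, real_inner_smul_right, huu, huv]
  have hvw : ⟪v, w⟫ = U := by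
    rw [hU, inner_add_right, real_inner_smul_right, real_inner_comm, huv, hvv]
  have hww : ⟪w, w⟫ = T₃ := by
    rw [hT₃, inner_add_left, real_inner_smul_left, huw, inner_add_right, real_inner_smul_right,
      real_inner_comm, huv, hvv, hT₂]
    ring
  have key := angle_eq_angle_smul_add_add_angle_smul_add u hv hc
  rwa [← arccos_inner_div_sqrt_eq_angle, ← arccos_inner_div_sqrt_eq_angle u w,
    ← arccos_inner_div_sqrt_eq_angle v w, huu, huv, hvv, huw, hvw, hww] at key

/-- For `k ≥ 3` and `λ_1 < ⋯ < λ_k`, with cyclic `d_i = λ_{i+1} - λ_i`,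
`s_i = λ_{i+1} + λ_i`, and the quantities `S₁ = ∑ 1/d_i`, `S₂ = ∑ s_i/d_i`,
`S₃ = ∑ s_i²/d_i`, `T₂ = ∑ (2+s_i)/d_i`, `T₃ = ∑ (2+s_i)²/d_i`,
`U = ∑ s_i(2+s_i)/d_i`: all the stated positivity and strict Cauchy–Schwarz
inequalities hold, and the angle-addition identity
`arccos(S₂/√(S₁S₃)) = arccos(T₂/√(S₁T₃)) + arccos(U/√(S₃T₃))` holds. -/
theorem cyclic_angle_addition
    (k : ℕ) (hk : 3 ≤ k) (lam : Fin k → ℝ) (hmono : StrictMono lam)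
    (d s : Fin k → ℝ)
    (hd : ∀ i, d i = lam (i + ⟨1, by omega⟩) - lam i)
    (hs : ∀ i, s i = lam (i + ⟨1, by omega⟩) + lam i)
    (S₁ S₂ S₃ T₂ T₃ U : ℝ)
    (hS₁ : S₁ = ∑ i : Fin k, 1 / d i)
    (hS₂ : S₂ = ∑ i : Fin k, s i / d i)
    (hS₃ : S₃ = ∑ i : Fin k, (s i) ^ 2 / d i)
    (hT₂ : T₂ = ∑ i : Fin k, (2 + s i) / d i)
    (hT₃ : T₃ = ∑ i : Fin k, (2 + s i) ^ 2 / d i)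
    (hU : U = ∑ i : Fin k, s i * (2 + s i) / d i) :
    0 < S₁ ∧ 0 < S₃ ∧ 0 < T₃ ∧
      S₂ ^ 2 < S₁ * S₃ ∧ T₂ ^ 2 < S₁ * T₃ ∧ U ^ 2 < S₃ * T₃ ∧
      Real.arccos (S₂ / Real.sqrt (S₁ * S₃)) =
        Real.arccos (T₂ / Real.sqrt (S₁ * T₃)) +
          Real.arccos (U / Real.sqrt (S₃ * T₃)) := by
  have hQ : ∀ a b : ℝ, (a ≠ 0 ∨ b ≠ 0) → 0 < a ^ 2 * S₁ + 2 * a * b * S₂ + b ^ 2 * S₃ := by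
    intro a b hab
    have h := cyclic_sum_sq_div_pos hk hmono hab
    simp only [← hd, ← hs, sum_add_mul_sq_div] at h
    rwa [hS₁, hS₂, hS₃]
  have hS₁pos : 0 < S₁ := by simpa using hQ 1 0 (by simp)
  have hS₃pos : 0 < S₃ := by simpa using hQ 0 1 (by simp)
  have hD : S₂ ^ 2 < S₁ * S₃ := by
    have h := hQ S₂ (-S₁) (Or.inr (neg_ne_zero.2 hS₁pos.ne'))
    nlinarith
  have hT₂' : T₂ = 2 * S₁ + S₂ := by
    rw [hT₂, hS₁, hS₂, mul_sum, ← sum_add_distrib]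
    exact sum_congr rfl fun i _ ↦ by ring
  have hT₃' : T₃ = 2 ^ 2 * S₁ + 2 * 2 * S₂ + S₃ := by
    simpa only [hT₃, hS₁, hS₂, hS₃, one_mul, mul_one, one_pow] using
      sum_add_mul_sq_div univ s d 2 1
  have hU' : U = 2 * S₂ + S₃ := by
    rw [hU, hS₂, hS₃, mul_sum, ← sum_add_distrib]
    exact sum_congr rfl fun i _ ↦ by ring
  refine ⟨hS₁pos, hS₃pos, by rw [hT₃']; nlinarith [hQ 2 1 (by simp)],
    hD, by rw [hT₂', hT₃']; nlinarith, by rw [hU', hT₃']; nlinarith,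
    arccos_div_sqrt_eq_arccos_add_arccos hS₁pos hS₃pos hD.le two_pos hT₂' hT₃' hU'⟩
end
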